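/- In the field ℚ(x_1,x_2) of rational functions in two variables over ℚ, the following identity holds: (x_1 − x_2)·1/((1−x_1^3)^2(1−x_1^2x_2)^2(1−x_1x_2^2)^2(1−x_2^3)^2) = x_1·h(x_1, x_1x_2) − x_2·h(x_2, x_1x_2), where h(v_1,v_2) = p(v_1,v_2)/((1−v_1^3)^2(1−v_1v_2)^2(1−v_2^3)^2(1−v_2^6)^3) and p(v_1,v_2) = (1−v_2^3+v_2^6)((1+v_1^6v_2^3)(1+v_2^6) − 2v_1^3v_2^3(1+v_2^3)) − v_1v_2(1−v_2^3)(2(1−v_2^3−v_2^9) − v_1v_2(4−v_2^3−v_2^9) − v_1^3(1+v_2^6−4v_2^9) + 2v_1^4v_2(1+v_2^6−v_2^9)). (This expresses that h is the multiplicity series M' of the Hilbert series of the symmetric algebra K[W(3)⊕W(3)] of the GL_2-module W(3)⊕W(3).) -/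

import Mathlib

/-! Clearing denominators turns the identity into a polynomial identity in `x₁, x₂`. This is
legitimate because every binomial `1 - x₁ᵃx₂ᵇ` with `a + b > 0` is nonzero in `ℚ(x₁,x₂)`: its
constant coefficient is `1`. -/

/-- The numerator polynomial `p(v₁,v₂)` of the multiplicity series of
`H(K[W(3)⊕W(3)])`. -/
noncomputable def numerW3W3 (v1 v2 : FractionRing (MvPolynomial (Fin 2) ℚ)) :
    FractionRing (MvPolynomial (Fin 2) ℚ) :=
  (1 - v2 ^ 3 + v2 ^ 6) *
      ((1 + v1 ^ 6 * v2 ^ 3) * (1 + v2 ^ 6) - 2 * v1 ^ 3 * v2 ^ 3 * (1 + v2 ^ 3)) -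
    v1 * v2 * (1 - v2 ^ 3) *
      (2 * (1 - v2 ^ 3 - v2 ^ 9) - v1 * v2 * (4 - v2 ^ 3 - v2 ^ 9) -
        v1 ^ 3 * (1 + v2 ^ 6 - 4 * v2 ^ 9) + 2 * v1 ^ 4 * v2 * (1 + v2 ^ 6 - v2 ^ 9))

/-- The candidate multiplicity series `M'(H(K[W(3)⊕W(3)]); v₁, v₂)`. -/
noncomputable def multSeriesW3W3 (v1 v2 : FractionRing (MvPolynomial (Fin 2) ℚ)) :
    FractionRing (MvPolynomial (Fin 2) ℚ) :=
  numerW3W3 v1 v2 /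
    ((1 - v1 ^ 3) ^ 2 * (1 - v1 * v2) ^ 2 * (1 - v2 ^ 3) ^ 2 * (1 - v2 ^ 6) ^ 3)

theorem one_sub_algebraMap_ne_zero {σ R K : Type*} [CommRing R] [Nontrivial R] [CommRing K]
    [Algebra (MvPolynomial σ R) K] [IsFractionRing (MvPolynomial σ R) K]
    {q : MvPolynomial σ R} (hq : MvPolynomial.constantCoeff q = 0) :
    1 - algebraMap (MvPolynomial σ R) K q ≠ 0 := by
  rw [← map_one (algebraMap (MvPolynomial σ R) K), ← map_sub, Ne,
    IsFractionRing.to_map_eq_zero_iff]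
  intro h
  simpa [hq] using congrArg MvPolynomial.constantCoeff h

theorem sub_mul_one_div_eq_mul_multSeriesW3W3_sub
    (x1 x2 : FractionRing (MvPolynomial (Fin 2) ℚ))
    (h1 : 1 - x1 ^ 3 ≠ 0) (h2 : 1 - x2 ^ 3 ≠ 0) (h12 : 1 - x1 ^ 2 * x2 ≠ 0)
    (h21 : 1 - x1 * x2 ^ 2 ≠ 0) (h6 : 1 - (x1 * x2) ^ 6 ≠ 0) :
    (x1 - x2) *
        (1 / ((1 - x1 ^ 3) ^ 2 * (1 - x1 ^ 2 * x2) ^ 2 * (1 - x1 * x2 ^ 2) ^ 2 *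
          (1 - x2 ^ 3) ^ 2)) =
      x1 * multSeriesW3W3 x1 (x1 * x2) - x2 * multSeriesW3W3 x2 (x1 * x2) := by
  have h3 : 1 - (x1 * x2) ^ 3 ≠ 0 := fun h => h6 <| by
    linear_combination (1 + (x1 * x2) ^ 3) * h
  have h12' : 1 - x1 * (x1 * x2) ≠ 0 := by convert h12 using 1; ring
  have h21' : 1 - x2 * (x1 * x2) ≠ 0 := by convert h21 using 1; ring
  have hD : (1 - x1 ^ 3) ^ 2 * (1 - x1 ^ 2 * x2) ^ 2 * (1 - x1 * x2 ^ 2) ^ 2 *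
      (1 - x2 ^ 3) ^ 2 ≠ 0 := by positivity
  have hE1 : (1 - x1 ^ 3) ^ 2 * (1 - x1 * (x1 * x2)) ^ 2 * (1 - (x1 * x2) ^ 3) ^ 2 *
      (1 - (x1 * x2) ^ 6) ^ 3 ≠ 0 := by positivity
  have hE2 : (1 - x2 ^ 3) ^ 2 * (1 - x2 * (x1 * x2)) ^ 2 * (1 - (x1 * x2) ^ 3) ^ 2 *
      (1 - (x1 * x2) ^ 6) ^ 3 ≠ 0 := by positivity
  rw [multSeriesW3W3, multSeriesW3W3, numerW3W3, numerW3W3, mul_one_div,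
    ← mul_div_assoc, ← mul_div_assoc, div_sub_div _ _ hE1 hE2,
    div_eq_div_iff hD (mul_ne_zero hE1 hE2)]
  ring

/-- In `ℚ(x₁,x₂)` one has
`(x₁ − x₂)/((1−x₁³)²(1−x₁²x₂)²(1−x₁x₂²)²(1−x₂³)²) = x₁·h(x₁,x₁x₂) − x₂·h(x₂,x₁x₂)`
where `h = multSeriesW3W3` is the multiplicity series of the Hilbert series of
the symmetric algebra `K[W(3)⊕W(3)]`. -/
theorem multiplicity_series_KW3W3
    (x1 x2 : FractionRing (MvPolynomial (Fin 2) ℚ))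
    (hx1 : x1 = algebraMap (MvPolynomial (Fin 2) ℚ) _ (MvPolynomial.X 0))
    (hx2 : x2 = algebraMap (MvPolynomial (Fin 2) ℚ) _ (MvPolynomial.X 1)) :
    (x1 - x2) *
        (1 / ((1 - x1 ^ 3) ^ 2 * (1 - x1 ^ 2 * x2) ^ 2 * (1 - x1 * x2 ^ 2) ^ 2 *
          (1 - x2 ^ 3) ^ 2)) =
      x1 * multSeriesW3W3 x1 (x1 * x2) - x2 * multSeriesW3W3 x2 (x1 * x2) := by
  subst hx1 hx2
  refine sub_mul_one_div_eq_mul_multSeriesW3W3_sub _ _ ?_ ?_ ?_ ?_ ?_ <;>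
    simp only [← map_pow, ← map_mul] <;> exact one_sub_algebraMap_ne_zero (by simp)
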